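/- arXiv:2311.12743 — 2 statements merged into one kernel-verified Lean document; each statement's English description precedes it below -/
import Mathlib

section
/- Suppose ∫_ℝ e^{rv} Π(dv) < ∞ for every r ∈ ℝ and that Π is not a Dirac point mass. Let φ ∈ D(T₁), set Ψ := ĉ·log T₁φ, and assume Ψ is bounded from below on the support of Π. Then Tφ is twice differentiable with (Tφ)''(y) = (1/ĉ)·[ ∫ v² e^{(yv−Ψ(v))/ĉ} Π(dv) / ∫ e^{(yv−Ψ(v))/ĉ} Π(dv) − ( ∫ v e^{(yv−Ψ(v))/ĉ} Π(dv) / ∫ e^{(yv−Ψ(v))/ĉ} Π(dv) )² ], and (Tφ)''(y) > 0 for every y ∈ ℝ, so that Tφ is strictly convex. -/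
open MeasureTheory Real Set Filter

noncomputable section

/-- Density of the centered normal distribution with variance `σ²`. -/
def pdens (σ y : ℝ) : ℝ :=
  (Real.sqrt (2 * Real.pi * σ ^ 2))⁻¹ * Real.exp (-(y ^ 2) / (2 * σ ^ 2))

/-- The operator `T₁`: `T₁φ(v) = ∫ exp((yv − φ(y))/ĉ) p_σ(y) dy` with `ĉ = cσ²`. -/
def T1 (c σ : ℝ) (φ : ℝ → ℝ) (v : ℝ) : ℝ :=
  ∫ y : ℝ, Real.exp ((y * v - φ y) / (c * σ ^ 2)) * pdens σ y

/-- The operator `T₂`: `T₂Ψ(y) = ∫ exp((yv − Ψ(v))/ĉ) Pr(dv)`. -/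
def T2 (c σ : ℝ) (Pr : Measure ℝ) (Ψ : ℝ → ℝ) (y : ℝ) : ℝ :=
  ∫ v : ℝ, Real.exp ((y * v - Ψ v) / (c * σ ^ 2)) ∂Pr

/-- `Ψ = ĉ · log T₁φ`. -/
def Ψof (c σ : ℝ) (φ : ℝ → ℝ) (v : ℝ) : ℝ := c * σ ^ 2 * Real.log (T1 c σ φ v)

/-- Topological support of a measure on `ℝ`. -/
def msupport (Pr : Measure ℝ) : Set ℝ := {v | ∀ U : Set ℝ, IsOpen U → v ∈ U → 0 < Pr U}

/-- The unnormalised operator `T₀φ = ĉ · log T₂(ĉ log T₁ φ)`. -/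
def T0op (c σ : ℝ) (Pr : Measure ℝ) (φ : ℝ → ℝ) (y : ℝ) : ℝ :=
  c * σ ^ 2 * Real.log (T2 c σ Pr (Ψof c σ φ) y)

/-- The normalised operator `Tφ = ĉ · log ( T₂(ĉ log T₁ φ) / T₂(ĉ log T₁ φ)(0) )`. -/
def Tnorm (c σ : ℝ) (Pr : Measure ℝ) (φ : ℝ → ℝ) (y : ℝ) : ℝ :=
  c * σ ^ 2 * Real.log (T2 c σ Pr (Ψof c σ φ) y / T2 c σ Pr (Ψof c σ φ) 0)

/-!
Writing `ν := e^{-Ψ/ĉ} Π`, the integral `T₂Ψ(y)` is the moment generating function of `ν` at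
`y/ĉ`, so `Tφ(y) = ĉ (Λ(y/ĉ) - Λ(0))` with `Λ` the cumulant generating function of `ν`. Since `Ψ`
is bounded below, `ν` inherits all exponential moments of `Π`, so `Λ` is analytic and `Λ''(t)` is
the variance of `ν` tilted by `e^{tv}`. This variance vanishes only if the tilted measure, which is
equivalent to `Π`, is a point mass.
-/

open ProbabilityTheory

namespace ProbabilityTheory

variable {Ω : Type*} {m : MeasurableSpace Ω} {X : Ω → ℝ} {μ : Measure Ω} {t : ℝ}

lemma hasDerivAt_cgf (ht : t ∈ interior (integrableExpSet X μ)) :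
    HasDerivAt (cgf X μ) (deriv (cgf X μ) t) t :=
  (analyticAt_cgf ht).differentiableAt.hasDerivAt

lemma hasDerivAt_deriv_cgf (ht : t ∈ interior (integrableExpSet X μ)) :
    HasDerivAt (deriv (cgf X μ)) (iteratedDeriv 2 (cgf X μ) t) t := by
  rw [iteratedDeriv_succ, iteratedDeriv_one]
  exact (analyticAt_cgf ht).deriv.differentiableAt.hasDerivAt

lemma iteratedDeriv_two_cgf_pos (ht : t ∈ interior (integrableExpSet X μ))
    (hX : ∀ b, ¬ ∀ᵐ ω ∂μ, X ω = b) : 0 < iteratedDeriv 2 (cgf X μ) t := by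
  rw [← variance_tilted_mul ht]
  refine (variance_nonneg _ _).lt_of_ne fun h ↦ hX ((μ.tilted (t * X ·))[X]) ?_
  have hμ : μ ≪ μ.tilted (t * X ·) :=
    absolutelyContinuous_tilted (interior_subset (s := integrableExpSet X μ) ht)
  exact hμ.ae_le (ae_eq_integral_of_variance_eq_zero (memLp_tilted_mul ht 2) h.symm)

def scaledCgf (X : Ω → ℝ) (μ : Measure Ω) (a y : ℝ) : ℝ :=
  a * (cgf X μ (y / a) - cgf X μ 0)

variable {a : ℝ} (hX : ∀ t, Integrable (fun ω ↦ exp (t * X ω)) μ)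
include hX

lemma mem_interior_integrableExpSet (t : ℝ) : t ∈ interior (integrableExpSet X μ) := by
  simp [show integrableExpSet X μ = univ from eq_univ_of_forall hX]

lemma hasDerivAt_scaledCgf (ha : a ≠ 0) (y : ℝ) :
    HasDerivAt (scaledCgf X μ a) (deriv (cgf X μ) (y / a)) y := by
  have h := (((hasDerivAt_cgf (mem_interior_integrableExpSet hX (y / a))).comp y
    ((hasDerivAt_id y).div_const a)).sub_const (cgf X μ 0)).const_mul a
  exact h.congr_deriv (by field_simp)

lemma hasDerivAt_deriv_scaledCgf (ha : a ≠ 0) (y : ℝ) :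
    HasDerivAt (deriv (scaledCgf X μ a)) (a⁻¹ * iteratedDeriv 2 (cgf X μ) (y / a)) y := by
  have h := (hasDerivAt_deriv_cgf (mem_interior_integrableExpSet hX (y / a))).comp y
    ((hasDerivAt_id y).div_const a)
  rw [funext fun y ↦ (hasDerivAt_scaledCgf hX ha y).deriv]
  exact h.congr_deriv (by ring)

lemma strictConvexOn_scaledCgf (ha : 0 < a) (hXc : ∀ b, ¬ ∀ᵐ ω ∂μ, X ω = b) :
    StrictConvexOn ℝ univ (scaledCgf X μ a) := by
  refine strictConvexOn_univ_of_deriv2_pos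
    (continuous_iff_continuousAt.2 fun y ↦ (hasDerivAt_scaledCgf hX ha.ne' y).continuousAt)
    fun y ↦ ?_
  rw [Function.iterate_succ_apply', Function.iterate_one,
    (hasDerivAt_deriv_scaledCgf hX ha.ne' y).deriv]
  exact mul_pos (inv_pos.2 ha) (iteratedDeriv_two_cgf_pos (mem_interior_integrableExpSet hX _) hXc)

end ProbabilityTheory

lemma MeasureTheory.Measure.eq_dirac_of_ae_eq {α : Type*} [MeasurableSpace α]
    [MeasurableSingletonClass α] {μ : Measure α} [IsProbabilityMeasure μ] {a : α}
    (h : ∀ᵐ x ∂μ, x = a) : μ = Measure.dirac a := by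
  have hsum := (Measure.ae_mem_finset_iff (s := {a})).1 (by simpa using h)
  rwa [Finset.sum_singleton,
    (prob_compl_eq_zero_iff (measurableSet_singleton a)).1 (ae_iff.1 h), one_smul] at hsum

def gibbsMeasure (μ : Measure ℝ) (Ψ : ℝ → ℝ) (ĉ : ℝ) : Measure ℝ :=
  μ.withDensity fun v ↦ ENNReal.ofReal (exp (-Ψ v / ĉ))

section Gibbs

variable {μ : Measure ℝ} {Ψ : ℝ → ℝ} {ĉ : ℝ} (hΨ : Measurable Ψ)
include hΨ

lemma integral_gibbsMeasure (g : ℝ → ℝ) (y : ℝ) :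
    ∫ v, g v * exp (y / ĉ * v) ∂gibbsMeasure μ Ψ ĉ = ∫ v, g v * exp ((y * v - Ψ v) / ĉ) ∂μ := by
  rw [gibbsMeasure, integral_withDensity_eq_integral_toReal_smul (by fun_prop)
    (ae_of_all _ fun _ ↦ ENNReal.ofReal_lt_top)]
  congr with v
  rw [ENNReal.toReal_ofReal (exp_pos _).le, smul_eq_mul, mul_left_comm, ← exp_add]
  ring_nf

lemma integrable_gibbsMeasure_iff {g : ℝ → ℝ} :
    Integrable g (gibbsMeasure μ Ψ ĉ) ↔ Integrable (fun v ↦ exp (-Ψ v / ĉ) * g v) μ := by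
  rw [gibbsMeasure, integrable_withDensity_iff_integrable_smul' (by fun_prop)
    (ae_of_all _ fun _ ↦ ENNReal.ofReal_lt_top)]
  simp only [ENNReal.toReal_ofReal (exp_pos _).le, smul_eq_mul]

lemma integrable_exp_mul_gibbsMeasure {K t : ℝ} (hĉ : 0 < ĉ) (hK : ∀ᵐ v ∂μ, -K ≤ Ψ v)
    (ht : Integrable (fun v ↦ exp (t * v)) μ) :
    Integrable (fun v ↦ exp (t * v)) (gibbsMeasure μ Ψ ĉ) := by
  rw [integrable_gibbsMeasure_iff hΨ]
  refine (ht.const_mul (exp (K / ĉ))).mono' (by fun_prop) ?_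
  filter_upwards [hK] with v hv
  rw [norm_of_nonneg (by positivity)]
  gcongr
  linarith

lemma absolutelyContinuous_gibbsMeasure : μ ≪ gibbsMeasure μ Ψ ĉ :=
  withDensity_absolutelyContinuous' (by fun_prop)
    (ae_of_all _ fun _ ↦ (ENNReal.ofReal_pos.2 (exp_pos _)).ne')

lemma iteratedDeriv_two_cgf_gibbsMeasure
    (hexp : ∀ t, Integrable (fun v ↦ exp (t * id v)) (gibbsMeasure μ Ψ ĉ)) (y : ℝ) :
    iteratedDeriv 2 (cgf id (gibbsMeasure μ Ψ ĉ)) (y / ĉ) =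
      (∫ v, v ^ 2 * exp ((y * v - Ψ v) / ĉ) ∂μ) / (∫ v, exp ((y * v - Ψ v) / ĉ) ∂μ) -
        ((∫ v, v * exp ((y * v - Ψ v) / ĉ) ∂μ) / (∫ v, exp ((y * v - Ψ v) / ĉ) ∂μ)) ^ 2 := by
  have hP := integral_gibbsMeasure (μ := μ) (ĉ := ĉ) hΨ (fun _ ↦ 1) y
  simp only [one_mul] at hP
  rw [iteratedDeriv_two_cgf (mem_interior_integrableExpSet hexp _),
    deriv_cgf (mem_interior_integrableExpSet hexp _)]
  simp only [mgf, id]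
  rw [hP, integral_gibbsMeasure hΨ, integral_gibbsMeasure hΨ (fun v ↦ v)]

end Gibbs

lemma ae_mem_msupport (Pr : Measure ℝ) : ∀ᵐ v ∂Pr, v ∈ msupport Pr := by
  rw [ae_iff]
  refine measure_null_of_locally_null _ fun x hx ↦ ?_
  obtain ⟨U, hUo, hxU, hU⟩ : ∃ U, IsOpen U ∧ x ∈ U ∧ Pr U = 0 := by simpa [msupport] using hx
  exact ⟨U, mem_nhdsWithin_of_mem_nhds (hUo.mem_nhds hxU), hU⟩

section Operators

variable {c σ : ℝ} {φ : ℝ → ℝ}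

lemma measurable_Ψof (hφ : Measurable φ) : Measurable (Ψof c σ φ) := by
  have h : StronglyMeasurable fun p : ℝ × ℝ ↦
      exp ((p.2 * p.1 - φ p.2) / (c * σ ^ 2)) * pdens σ p.2 := by
    unfold pdens
    fun_prop
  exact measurable_const.mul h.integral_prod_right'.measurable.log

lemma Tnorm_eq_scaledCgf {Pr : Measure ℝ} [NeZero Pr] (hφ : Measurable φ)
    (hexp : ∀ t, Integrable (fun v ↦ exp (t * id v)) (gibbsMeasure Pr (Ψof c σ φ) (c * σ ^ 2))) :
    Tnorm c σ Pr φ = scaledCgf id (gibbsMeasure Pr (Ψof c σ φ) (c * σ ^ 2)) (c * σ ^ 2) := by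
  set ν := gibbsMeasure Pr (Ψof c σ φ) (c * σ ^ 2)
  have hΨ := measurable_Ψof (c := c) (σ := σ) hφ
  have hν : ν ≠ 0 := fun h ↦ NeZero.ne Pr
    (Measure.absolutelyContinuous_zero_iff.1 (h ▸ absolutelyContinuous_gibbsMeasure hΨ))
  have hT2 (y : ℝ) : T2 c σ Pr (Ψof c σ φ) y = mgf id ν (y / (c * σ ^ 2)) := by
    simpa [mgf, T2] using (integral_gibbsMeasure (μ := Pr) hΨ (fun _ ↦ 1) y).symm
  funext y
  rw [Tnorm, scaledCgf, hT2, hT2, zero_div,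
    log_div (mgf_pos' hν (hexp _)).ne' (mgf_pos' hν (hexp _)).ne', cgf, cgf]

end Operators

theorem stmt4_general (c σ : ℝ) (hc : 0 < c) (hσ : 0 < σ)
    (Pr : Measure ℝ) [IsProbabilityMeasure Pr]
    (hMV : ∀ r : ℝ, Integrable (fun v : ℝ => Real.exp (r * v)) Pr)
    (hnd : ∀ v : ℝ, Pr ≠ Measure.dirac v)
    (φ : ℝ → ℝ) (hφ : Measurable φ)
    (K : ℝ) (hK : ∀ v ∈ msupport Pr, -K ≤ Ψof c σ φ v) :
    (∀ y : ℝ, HasDerivAt (deriv (Tnorm c σ Pr φ))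
      ((1 / (c * σ ^ 2)) *
        ((∫ v : ℝ, v ^ 2 * Real.exp ((y * v - Ψof c σ φ v) / (c * σ ^ 2)) ∂Pr) /
          (∫ v : ℝ, Real.exp ((y * v - Ψof c σ φ v) / (c * σ ^ 2)) ∂Pr) -
         ((∫ v : ℝ, v * Real.exp ((y * v - Ψof c σ φ v) / (c * σ ^ 2)) ∂Pr) /
          (∫ v : ℝ, Real.exp ((y * v - Ψof c σ φ v) / (c * σ ^ 2)) ∂Pr)) ^ 2)) y) ∧
    (∀ y : ℝ, 0 <
      (1 / (c * σ ^ 2)) *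
        ((∫ v : ℝ, v ^ 2 * Real.exp ((y * v - Ψof c σ φ v) / (c * σ ^ 2)) ∂Pr) /
          (∫ v : ℝ, Real.exp ((y * v - Ψof c σ φ v) / (c * σ ^ 2)) ∂Pr) -
         ((∫ v : ℝ, v * Real.exp ((y * v - Ψof c σ φ v) / (c * σ ^ 2)) ∂Pr) /
          (∫ v : ℝ, Real.exp ((y * v - Ψof c σ φ v) / (c * σ ^ 2)) ∂Pr)) ^ 2)) ∧
    StrictConvexOn ℝ Set.univ (Tnorm c σ Pr φ) := by
  have hĉ : 0 < c * σ ^ 2 := by positivity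
  have hΨ : Measurable (Ψof c σ φ) := measurable_Ψof hφ
  set ν := gibbsMeasure Pr (Ψof c σ φ) (c * σ ^ 2)
  have hexp (t : ℝ) : Integrable (fun v ↦ exp (t * id v)) ν :=
    integrable_exp_mul_gibbsMeasure hΨ hĉ ((ae_mem_msupport Pr).mono hK) (hMV t)
  have hnondeg (b : ℝ) : ¬ ∀ᵐ v ∂ν, id v = b := fun h ↦
    hnd b (Measure.eq_dirac_of_ae_eq ((absolutelyContinuous_gibbsMeasure hΨ).ae_le h))
  simp_rw [← iteratedDeriv_two_cgf_gibbsMeasure hΨ hexp, one_div, Tnorm_eq_scaledCgf hφ hexp]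
  exact ⟨hasDerivAt_deriv_scaledCgf hexp hĉ.ne',
    fun y ↦ mul_pos (inv_pos.2 hĉ)
      (iteratedDeriv_two_cgf_pos (mem_interior_integrableExpSet hexp _) hnondeg),
    strictConvexOn_scaledCgf hexp hĉ hnondeg⟩

/-- under all exponential moments and `Pr` not a point mass, for `φ ∈ D(T₁)` with
`Ψ := ĉ log T₁φ` bounded below on the support, `Tφ` is twice differentiable with second
derivative given by the (normalised) variance formula, which is strictly positive; hence `Tφ`
is strictly convex. -/
theorem stmt4 (c σ : ℝ) (hc : 0 < c) (hσ : 0 < σ)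
    (Pr : Measure ℝ) [IsProbabilityMeasure Pr]
    (hMV : ∀ r : ℝ, Integrable (fun v : ℝ => Real.exp (r * v)) Pr)
    (hnd : ∀ v : ℝ, Pr ≠ Measure.dirac v)
    (φ : ℝ → ℝ) (hφ : Measurable φ)
    (hD1 : ∀ v ∈ msupport Pr,
      Integrable (fun y : ℝ => Real.exp ((y * v - φ y) / (c * σ ^ 2)) * pdens σ y) ∧
        0 < T1 c σ φ v)
    (K : ℝ) (hK : ∀ v ∈ msupport Pr, -K ≤ Ψof c σ φ v) :
    (∀ y : ℝ, HasDerivAt (deriv (Tnorm c σ Pr φ))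
      ((1 / (c * σ ^ 2)) *
        ((∫ v : ℝ, v ^ 2 * Real.exp ((y * v - Ψof c σ φ v) / (c * σ ^ 2)) ∂Pr) /
          (∫ v : ℝ, Real.exp ((y * v - Ψof c σ φ v) / (c * σ ^ 2)) ∂Pr) -
         ((∫ v : ℝ, v * Real.exp ((y * v - Ψof c σ φ v) / (c * σ ^ 2)) ∂Pr) /
          (∫ v : ℝ, Real.exp ((y * v - Ψof c σ φ v) / (c * σ ^ 2)) ∂Pr)) ^ 2)) y) ∧
    (∀ y : ℝ, 0 <
      (1 / (c * σ ^ 2)) *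
        ((∫ v : ℝ, v ^ 2 * Real.exp ((y * v - Ψof c σ φ v) / (c * σ ^ 2)) ∂Pr) /
          (∫ v : ℝ, Real.exp ((y * v - Ψof c σ φ v) / (c * σ ^ 2)) ∂Pr) -
         ((∫ v : ℝ, v * Real.exp ((y * v - Ψof c σ φ v) / (c * σ ^ 2)) ∂Pr) /
          (∫ v : ℝ, Real.exp ((y * v - Ψof c σ φ v) / (c * σ ^ 2)) ∂Pr)) ^ 2)) ∧
    StrictConvexOn ℝ Set.univ (Tnorm c σ Pr φ) :=
  stmt4_general c σ hc hσ Pr hMV hnd φ hφ K hK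

end
end

section
/- Let p ∈ (0,1), c > 0, σ > 0 and ĉ := cσ². The function G : (0, 1/p) → ℝ defined by G(a) := ∫_ℝ e^{y/ĉ} / ( p(e^{y/ĉ} − 1) + a^{−1} ) · p_σ(y) dy is strictly increasing, with G(a) → 0 as a → 0+ and G(a) → 1/p as a → (1/p)−. Consequently there exists a unique a ∈ (0, 1/p) such that G(a) = 1. -/
open MeasureTheory Real Set Filter

noncomputable section

/-- The function `G(a) = ∫ e^{y/ĉ} / ( p(e^{y/ĉ} − 1) + a⁻¹ ) p_σ(y) dy` from the Bernoulli
fixed-point equation. -/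
def Gber (p c σ : ℝ) (a : ℝ) : ℝ :=
  ∫ y : ℝ,
    Real.exp (y / (c * σ ^ 2)) / (p * (Real.exp (y / (c * σ ^ 2)) - 1) + a⁻¹) * pdens σ y

/-! With `E = e^{y/ĉ} > 0` and `a ∈ (0, 1/p)`, the integrand `E / (p(E − 1) + a⁻¹)` is strictly
increasing in `a`, lies between `0` and `min (1/p) (E / (a⁻¹ − p))`, and falls short of `1/p` by at
most `(a⁻¹ − p) p⁻² E⁻¹`. Integrating these bounds against any probability measure for which
`E` and `E⁻¹` are integrable (the Gaussian has all exponential moments) gives strict monotonicity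
and both limits; domination by the constant `1/p` gives continuity, so the intermediate value
theorem produces the root of `G = 1`, unique by strict monotonicity. -/

open Topology ProbabilityTheory

theorem StrictMonoOn.existsUnique_eq_of_tendsto {α δ : Type*} [ConditionallyCompleteLinearOrder α]
    [TopologicalSpace α] [OrderTopology α] [DenselyOrdered α] [LinearOrder δ] [TopologicalSpace δ]
    [OrderClosedTopology δ] {f : α → δ} {l u : α} {v₁ v₂ y : δ} (hlu : l < u)
    (hmono : StrictMonoOn f (Ioo l u)) (hcont : ContinuousOn f (Ioo l u))
    (hl : Tendsto f (𝓝[Ioo l u] l) (𝓝 v₁)) (hu : Tendsto f (𝓝[Ioo l u] u) (𝓝 v₂))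
    (hy : y ∈ Ioo v₁ v₂) : ∃! x, x ∈ Ioo l u ∧ f x = y := by
  have := left_nhdsWithin_Ioo_neBot hlu
  have := right_nhdsWithin_Ioo_neBot hlu
  obtain ⟨x, hx, rfl⟩ :=
    isPreconnected_Ioo.intermediate_value_Ioo (l₁ := 𝓝[Ioo l u] l) (l₂ := 𝓝[Ioo l u] u)
      inf_le_right inf_le_right hcont hl hu hy
  exact ⟨x, ⟨hx, rfl⟩, fun x' hx' => hmono.injOn hx'.1 hx hx'.2⟩

lemma MeasureTheory.integral_lt_integral_of_forall_lt {α : Type*} [MeasurableSpace α]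
    {μ : Measure α} [NeZero μ] {f g : α → ℝ} (hf : Integrable f μ) (hg : Integrable g μ)
    (h : ∀ x, f x < g x) : ∫ x, f x ∂μ < ∫ x, g x ∂μ := by
  have hsupp : Function.support (fun x => g x - f x) = univ :=
    eq_univ_of_forall fun x => sub_ne_zero.2 (h x).ne'
  have hpos : 0 < ∫ x, (g x - f x) ∂μ := by
    rw [integral_pos_iff_support_of_nonneg (fun x => (sub_pos.2 (h x)).le) (hg.sub hf), hsupp]
    exact Measure.measure_univ_pos.2 (NeZero.ne μ)
  rw [integral_sub hg hf] at hpos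
  linarith

lemma lt_inv_of_mem_Ioo_zero_inv {p a : ℝ} (hp : 0 < p) (ha : a ∈ Ioo 0 p⁻¹) : p < a⁻¹ :=
  (lt_inv_comm₀ ha.1 hp).1 ha.2

def bernoulliRatio (p b e : ℝ) : ℝ := e / (p * (e - 1) + b)

section bernoulliRatio

variable {p b e : ℝ}

lemma bernoulliRatio_denom_pos (hp : 0 ≤ p) (he : 0 ≤ e) (hb : p < b) :
    0 < p * (e - 1) + b := by
  nlinarith

lemma bernoulliRatio_nonneg (hp : 0 ≤ p) (he : 0 ≤ e) (hb : p < b) :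
    0 ≤ bernoulliRatio p b e :=
  div_nonneg he (bernoulliRatio_denom_pos hp he hb).le

lemma bernoulliRatio_le_inv (hp : 0 < p) (he : 0 < e) (hb : p ≤ b) :
    bernoulliRatio p b e ≤ p⁻¹ :=
  calc bernoulliRatio p b e ≤ e / (p * e) :=
        div_le_div_of_nonneg_left he.le (by positivity) (by linarith)
    _ = p⁻¹ := by field_simp

lemma bernoulliRatio_le_div (hp : 0 ≤ p) (he : 0 ≤ e) (hb : p < b) :
    bernoulliRatio p b e ≤ e / (b - p) :=
  div_le_div_of_nonneg_left he (sub_pos.2 hb) (by nlinarith)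

lemma inv_sub_bernoulliRatio_le (hp : 0 < p) (he : 0 < e) (hb : p ≤ b) :
    p⁻¹ - bernoulliRatio p b e ≤ (b - p) / p ^ 2 * e⁻¹ := by
  have hd : 0 < p * (e - 1) + b := by nlinarith [mul_pos hp he]
  calc p⁻¹ - bernoulliRatio p b e = (b - p) / (p * (p * (e - 1) + b)) := by
        rw [bernoulliRatio]; field_simp; ring
    _ ≤ (b - p) / (p * (p * e)) :=
        div_le_div_of_nonneg_left (by linarith) (by positivity) (by gcongr; linarith)
    _ = (b - p) / p ^ 2 * e⁻¹ := by field_simp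

lemma bernoulliRatio_lt_of_lt {b' : ℝ} (hp : 0 ≤ p) (he : 0 < e) (hb : p < b) (hbb' : b < b') :
    bernoulliRatio p b' e < bernoulliRatio p b e :=
  div_lt_div_of_pos_left he (bernoulliRatio_denom_pos hp he.le hb) (by linarith)

lemma continuousOn_bernoulliRatio_inv (hp : 0 < p) (he : 0 ≤ e) :
    ContinuousOn (fun a => bernoulliRatio p a⁻¹ e) (Ioo 0 p⁻¹) :=
  continuousOn_const.div (continuousOn_const.add (continuousOn_inv₀.mono fun _ ha => ha.1.ne'))
    fun _ ha => (bernoulliRatio_denom_pos hp.le he (lt_inv_of_mem_Ioo_zero_inv hp ha)).ne'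

end bernoulliRatio

def bernoulliG {α : Type*} [MeasurableSpace α] (μ : Measure α) (p : ℝ) (E : α → ℝ) (a : ℝ) :
    ℝ :=
  ∫ x, bernoulliRatio p a⁻¹ (E x) ∂μ

section bernoulliG

variable {α : Type*} [MeasurableSpace α] {μ : Measure α} {p b : ℝ} {E : α → ℝ}

lemma integrable_bernoulliRatio [IsFiniteMeasure μ] (hp : 0 < p) (hE : ∀ x, 0 < E x)
    (hEm : AEStronglyMeasurable E μ) (hb : p < b) :
    Integrable (fun x => bernoulliRatio p b (E x)) μ := by
  refine Integrable.of_bound ?_ p⁻¹ (ae_of_all _ fun x => ?_)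
  · exact (hEm.aemeasurable.div (((hEm.aemeasurable.sub_const 1).const_mul p).add_const b))
      |>.aestronglyMeasurable
  · rw [Real.norm_of_nonneg (bernoulliRatio_nonneg hp.le (hE x).le hb)]
    exact bernoulliRatio_le_inv hp (hE x) hb.le

theorem strictMonoOn_bernoulliG [IsFiniteMeasure μ] [NeZero μ] (hp : 0 < p)
    (hE : ∀ x, 0 < E x) (hEm : AEStronglyMeasurable E μ) :
    StrictMonoOn (bernoulliG μ p E) (Ioo 0 p⁻¹) := by
  intro a ha a' ha' haa'
  have hb := lt_inv_of_mem_Ioo_zero_inv hp ha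
  have hb' := lt_inv_of_mem_Ioo_zero_inv hp ha'
  exact integral_lt_integral_of_forall_lt (integrable_bernoulliRatio hp hE hEm hb)
    (integrable_bernoulliRatio hp hE hEm hb')
    fun x => bernoulliRatio_lt_of_lt hp.le (hE x) hb' (inv_strictAnti₀ ha.1 haa')

theorem continuousOn_bernoulliG [IsFiniteMeasure μ] (hp : 0 < p) (hE : ∀ x, 0 < E x)
    (hEm : AEStronglyMeasurable E μ) : ContinuousOn (bernoulliG μ p E) (Ioo 0 p⁻¹) := by
  refine continuousOn_of_dominated (bound := fun _ => p⁻¹)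
    (fun a ha => (integrable_bernoulliRatio hp hE hEm (lt_inv_of_mem_Ioo_zero_inv hp ha)).1)
    (fun a ha => ae_of_all _ fun x => ?_) (integrable_const _)
    (ae_of_all _ fun x => continuousOn_bernoulliRatio_inv hp (hE x).le)
  have hb := lt_inv_of_mem_Ioo_zero_inv hp ha
  rw [Real.norm_of_nonneg (bernoulliRatio_nonneg hp.le (hE x).le hb)]
  exact bernoulliRatio_le_inv hp (hE x) hb.le

lemma bernoulliG_nonneg (hp : 0 < p) (hE : ∀ x, 0 < E x) {a : ℝ} (ha : a ∈ Ioo 0 p⁻¹) :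
    0 ≤ bernoulliG μ p E a :=
  integral_nonneg fun x => bernoulliRatio_nonneg hp.le (hE x).le (lt_inv_of_mem_Ioo_zero_inv hp ha)

lemma bernoulliG_le_inv [IsProbabilityMeasure μ] (hp : 0 < p) (hE : ∀ x, 0 < E x)
    (hEm : AEStronglyMeasurable E μ) {a : ℝ} (ha : a ∈ Ioo 0 p⁻¹) : bernoulliG μ p E a ≤ p⁻¹ := by
  have hb := lt_inv_of_mem_Ioo_zero_inv hp ha
  calc bernoulliG μ p E a ≤ ∫ _, p⁻¹ ∂μ :=
        integral_mono (integrable_bernoulliRatio hp hE hEm hb) (integrable_const _)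
          fun x => bernoulliRatio_le_inv hp (hE x) hb.le
    _ = p⁻¹ := by rw [integral_const, probReal_univ, one_smul]

lemma bernoulliG_le_mul_integral [IsFiniteMeasure μ] (hp : 0 < p) (hE : ∀ x, 0 < E x)
    (hEi : Integrable E μ) {a : ℝ} (ha : a ∈ Ioo 0 p⁻¹) :
    bernoulliG μ p E a ≤ (a⁻¹ - p)⁻¹ * ∫ x, E x ∂μ := by
  have hb := lt_inv_of_mem_Ioo_zero_inv hp ha
  rw [← integral_const_mul]
  refine integral_mono (integrable_bernoulliRatio hp hE hEi.1 hb) (hEi.const_mul _) fun x => ?_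
  rw [← div_eq_inv_mul]
  exact bernoulliRatio_le_div hp.le (hE x).le hb

lemma inv_sub_bernoulliG_le [IsProbabilityMeasure μ] (hp : 0 < p) (hE : ∀ x, 0 < E x)
    (hEm : AEStronglyMeasurable E μ) (hEi : Integrable (fun x => (E x)⁻¹) μ) {a : ℝ}
    (ha : a ∈ Ioo 0 p⁻¹) :
    p⁻¹ - bernoulliG μ p E a ≤ (a⁻¹ - p) / p ^ 2 * ∫ x, (E x)⁻¹ ∂μ := by
  have hb := lt_inv_of_mem_Ioo_zero_inv hp ha
  have hGi := integrable_bernoulliRatio hp hE hEm hb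
  calc p⁻¹ - bernoulliG μ p E a = ∫ x, (p⁻¹ - bernoulliRatio p a⁻¹ (E x)) ∂μ := by
        rw [integral_sub (integrable_const _) hGi, integral_const, probReal_univ, one_smul,
          bernoulliG]
    _ ≤ ∫ x, (a⁻¹ - p) / p ^ 2 * (E x)⁻¹ ∂μ :=
        integral_mono ((integrable_const _).sub hGi) (hEi.const_mul _)
          fun x => inv_sub_bernoulliRatio_le hp (hE x) hb.le
    _ = (a⁻¹ - p) / p ^ 2 * ∫ x, (E x)⁻¹ ∂μ := integral_const_mul _ _

theorem tendsto_bernoulliG_zero [IsFiniteMeasure μ] (hp : 0 < p) (hE : ∀ x, 0 < E x)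
    (hEi : Integrable E μ) :
    Tendsto (bernoulliG μ p E) (𝓝[Ioo 0 p⁻¹] 0) (𝓝 0) := by
  have hinv : Tendsto (fun a : ℝ => (a⁻¹ - p)⁻¹) (𝓝[Ioo 0 p⁻¹] 0) (𝓝 0) :=
    (tendsto_atTop_add_const_right _ (-p)
      (tendsto_inv_nhdsGT_zero.mono_left (nhdsWithin_mono 0 Ioo_subset_Ioi_self))).inv_tendsto_atTop
  have hbound := hinv.mul_const (∫ x, E x ∂μ)
  rw [zero_mul] at hbound
  exact tendsto_of_tendsto_of_tendsto_of_le_of_le' tendsto_const_nhds hbound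
    (eventually_nhdsWithin_of_forall fun a ha => bernoulliG_nonneg hp hE ha)
    (eventually_nhdsWithin_of_forall fun a ha => bernoulliG_le_mul_integral hp hE hEi ha)

theorem tendsto_bernoulliG_inv [IsProbabilityMeasure μ] (hp : 0 < p) (hE : ∀ x, 0 < E x)
    (hEm : AEStronglyMeasurable E μ) (hEi : Integrable (fun x => (E x)⁻¹) μ) :
    Tendsto (bernoulliG μ p E) (𝓝[Ioo 0 p⁻¹] p⁻¹) (𝓝 p⁻¹) := by
  have hinv : Tendsto (fun a : ℝ => a⁻¹ - p) (𝓝[Ioo 0 p⁻¹] p⁻¹) (𝓝 0) := by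
    have := ((continuousAt_inv₀ (inv_ne_zero hp.ne')).tendsto.sub_const p).mono_left
      (nhdsWithin_le_nhds (s := Ioo 0 p⁻¹))
    rwa [inv_inv, sub_self] at this
  have hlower := tendsto_const_nhds (x := p⁻¹) |>.sub
    ((hinv.div_const (p ^ 2)).mul_const (∫ x, (E x)⁻¹ ∂μ))
  rw [zero_div, zero_mul, sub_zero] at hlower
  exact tendsto_of_tendsto_of_tendsto_of_le_of_le' hlower tendsto_const_nhds
    (eventually_nhdsWithin_of_forall fun a ha => by
      linarith [inv_sub_bernoulliG_le hp hE hEm hEi ha])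
    (eventually_nhdsWithin_of_forall fun a ha => bernoulliG_le_inv hp hE hEm ha)

end bernoulliG

lemma pdens_eq_gaussianPDFReal (σ : ℝ) : pdens σ = gaussianPDFReal 0 (σ ^ 2).toNNReal := by
  ext y
  simp [pdens, gaussianPDFReal, Real.coe_toNNReal _ (sq_nonneg σ)]

lemma Gber_eq_bernoulliG (p c : ℝ) {σ : ℝ} (hσ : σ ≠ 0) :
    Gber p c σ = bernoulliG (gaussianReal 0 (σ ^ 2).toNNReal) p
      (fun y => Real.exp (y / (c * σ ^ 2))) := by
  ext a
  rw [bernoulliG, integral_gaussianReal_eq_integral_smul (by simpa using hσ), Gber,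
    pdens_eq_gaussianPDFReal]
  simp only [smul_eq_mul, bernoulliRatio, mul_comm]

lemma integrable_exp_div_gaussianReal (μ₀ : ℝ) (v : NNReal) (t : ℝ) :
    Integrable (fun y => Real.exp (y / t)) (gaussianReal μ₀ v) := by
  simpa only [div_eq_inv_mul] using integrable_exp_mul_gaussianReal (μ := μ₀) (v := v) t⁻¹

theorem stmt10_general (p c σ : ℝ) (hp : p ∈ Set.Ioo (0 : ℝ) 1) (hσ : 0 < σ) :
    StrictMonoOn (Gber p c σ) (Set.Ioo 0 p⁻¹) ∧
    Filter.Tendsto (Gber p c σ) (nhdsWithin 0 (Set.Ioo 0 p⁻¹)) (nhds 0) ∧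
    Filter.Tendsto (Gber p c σ) (nhdsWithin p⁻¹ (Set.Ioo 0 p⁻¹)) (nhds p⁻¹) ∧
    (∃! a : ℝ, a ∈ Set.Ioo 0 p⁻¹ ∧ Gber p c σ a = 1) := by
  obtain ⟨hp0, hp1⟩ := hp
  rw [Gber_eq_bernoulliG p c hσ.ne']
  have hE : ∀ y, 0 < Real.exp (y / (c * σ ^ 2)) := fun y => Real.exp_pos _
  have hEi := integrable_exp_div_gaussianReal 0 (σ ^ 2).toNNReal (c * σ ^ 2)
  have hEinv : Integrable (fun y => (Real.exp (y / (c * σ ^ 2)))⁻¹)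
      (gaussianReal 0 (σ ^ 2).toNNReal) := by
    simpa only [← Real.exp_neg, ← div_neg] using
      integrable_exp_div_gaussianReal 0 (σ ^ 2).toNNReal (-(c * σ ^ 2))
  have hmono := strictMonoOn_bernoulliG hp0 hE hEi.1
  have hzero := tendsto_bernoulliG_zero hp0 hE hEi
  have hinv := tendsto_bernoulliG_inv hp0 hE hEi.1 hEinv
  exact ⟨hmono, hzero, hinv, hmono.existsUnique_eq_of_tendsto (inv_pos.2 hp0)
    (continuousOn_bernoulliG hp0 hE hEi.1) hzero hinv ⟨one_pos, one_lt_inv₀ hp0 |>.2 hp1⟩⟩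

/-- `G` is strictly increasing on `(0, 1/p)`, tends to `0` at `0+` and to `1/p`
at `(1/p)−`; consequently there is a unique `a ∈ (0, 1/p)` with `G(a) = 1`. -/
theorem stmt10 (p c σ : ℝ) (hp : p ∈ Set.Ioo (0 : ℝ) 1) (hc : 0 < c) (hσ : 0 < σ) :
    StrictMonoOn (Gber p c σ) (Set.Ioo 0 p⁻¹) ∧
    Filter.Tendsto (Gber p c σ) (nhdsWithin 0 (Set.Ioo 0 p⁻¹)) (nhds 0) ∧
    Filter.Tendsto (Gber p c σ) (nhdsWithin p⁻¹ (Set.Ioo 0 p⁻¹)) (nhds p⁻¹) ∧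
    (∃! a : ℝ, a ∈ Set.Ioo 0 p⁻¹ ∧ Gber p c σ a = 1) :=
  stmt10_general p c σ hp hσ

end
end
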